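/- Let S be a finite generalized quadrangle of order (s,t) with s ≥ 2, and S' a proper full subquadrangle of order (s,t') such that t' ≠ 1, t = s·t', (θ−1)·t = s², and every subtended ovoid of S' is subtended by exactly θ points of S outside S', where θ > 1. Let x and x' be points of S outside S'. If x' is collinear with no point of O_x⊥, then |O_x ∩ O_{x'}| = t/s + 1. If x' ∉ O_x⊥ but x' is collinear with some point of O_x⊥, then |O_x ∩ O_{x'}| = 1. -/

import Mathlib

/-!
Let `n = st' + 1`, the size of an ovoid of `S'`. The points of `O_x` lie on distinct lines
through the external point `x`, and there are `t + 1 = n` such lines, so every line through an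
external point meets `S'` in exactly one point. Hence two distinct collinear external points
subtend ovoids meeting in exactly one point. Since `s ≥ 2`, this identifies `O_x⊥` with the set
of external points subtending `O_x`; they are pairwise non-collinear, which gives the second
claim.

For the first claim put `k(u) = |O_x ∩ u⊥|`. Counting incident pairs and triples gives `∑ k` and
`∑ k²` over all points of `S`, while `k = 1` on `O_x` and on the external points collinear with
a (necessarily unique) point of `O_x⊥`, and `k = n` on `O_x⊥`. The relation `(θ - 1)t' = s`
makes `∑ (k(u) - t' - 1)²` over all remaining points vanish, so `k(x') = t' + 1 = t/s + 1`.
-/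

namespace GQpaper

variable {P L : Type}

/-- Two points of a point-line geometry are collinear: they are equal or lie on a
common line. -/
def Collinear (I : P → L → Prop) (x y : P) : Prop :=
  x = y ∨ ∃ l : L, I x l ∧ I y l

/-- Generalized quadrangle axioms: two distinct points are on at most one common line,
and for every non-incident point-line pair `(x, l)` there is a unique pair `(y, M)`
with `x I M`, `y I M`, `y I l`. -/
def IsGQ (I : P → L → Prop) : Prop :=
  (∀ x y : P, x ≠ y → ∀ M N : L, I x M → I y M → I x N → I y N → M = N) ∧
  (∀ (x : P) (l : L), ¬ I x l → ∃! p : P × L, I x p.2 ∧ I p.1 p.2 ∧ I p.1 l)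

/-- Thick: every line has at least 3 points and every point is on at least 3 lines. -/
def Thick (I : P → L → Prop) : Prop :=
  (∀ l : L, ∃ x y z : P, x ≠ y ∧ y ≠ z ∧ x ≠ z ∧ I x l ∧ I y l ∧ I z l) ∧
  (∀ x : P, ∃ l m n : L, l ≠ m ∧ m ≠ n ∧ l ≠ n ∧ I x l ∧ I x m ∧ I x n)

/-- The induced incidence relation on a subgeometry `(P', L')`. -/
def SubIncid (I : P → L → Prop) (P' : Set P) (L' : Set L) : ↥P' → ↥L' → Prop :=
  fun x l => I x.1 l.1

/-- A subgeometry is full if every point of the ambient geometry incident with one of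
its lines belongs to it. -/
def IsFull (I : P → L → Prop) (P' : Set P) (L' : Set L) : Prop :=
  ∀ l ∈ L', ∀ x : P, I x l → x ∈ P'

/-- A geometrical hyperplane: each of its lines contains at least 2 of its points, and
every line of the ambient geometry either is a line of the subgeometry all of whose
points lie in the subgeometry, or contains exactly one point of the subgeometry. -/
def IsGeomHyperplane (I : P → L → Prop) (P' : Set P) (L' : Set L) : Prop :=
  (∀ l ∈ L', ∃ x y : P, x ≠ y ∧ x ∈ P' ∧ y ∈ P' ∧ I x l ∧ I y l) ∧
  (∀ l : L, (l ∈ L' ∧ ∀ x : P, I x l → x ∈ P') ∨ (l ∉ L' ∧ ∃! x : P, I x l ∧ x ∈ P'))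

/-- An ovoid of the subquadrangle `(P', L')`: a set of its points meeting every one of
its lines in exactly one point. -/
def IsOvoid (I : P → L → Prop) (P' : Set P) (L' : Set L) (O : Set P) : Prop :=
  O ⊆ P' ∧ ∀ l ∈ L', ∃! x : P, x ∈ O ∧ I x l

/-- The ovoid of `S'` subtended by an external point `x`: the points of `P'` collinear
with `x`. -/
def subtendedOvoid (I : P → L → Prop) (P' : Set P) (x : P) : Set P :=
  {y : P | y ∈ P' ∧ Collinear I x y}

/-- The rosette of ovoids determined by a line `l` (not in the subquadrangle): the set
of the ovoids subtended by the external points of `l`. -/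
def rosette (I : P → L → Prop) (P' : Set P) (l : L) : Set (Set P) :=
  {O : Set P | ∃ x : P, x ∉ P' ∧ I x l ∧ O = subtendedOvoid I P' x}

/-- Points of the geometry `A = S \ S'`. -/
abbrev APoint (P' : Set P) : Type := {x : P // x ∉ P'}

/-- Lines of the geometry `A = S \ S'`. -/
abbrev ALine (L' : Set L) : Type := {l : L // l ∉ L'}

/-- Incidence in the geometry `A`. -/
def AIncid (I : P → L → Prop) (P' : Set P) (L' : Set L) :
    APoint P' → ALine L' → Prop :=
  fun x l => I x.1 l.1

/-- Points of the geometry `E`: the subtended ovoids of `S'`. -/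
abbrev EPoint (I : P → L → Prop) (P' : Set P) : Type :=
  {O : Set P // ∃ x : P, x ∉ P' ∧ O = subtendedOvoid I P' x}

/-- Lines of the geometry `E`: the rosettes of subtended ovoids of `S'`. -/
abbrev ELine (I : P → L → Prop) (P' : Set P) (L' : Set L) : Type :=
  {R : Set (Set P) // ∃ l : L, l ∉ L' ∧ R = rosette I P' l}

/-- Incidence in `E`: membership of an ovoid in a rosette. -/
def EIncid (I : P → L → Prop) (P' : Set P) (L' : Set L) :
    EPoint I P' → ELine I P' L' → Prop :=
  fun O R => O.1 ∈ R.1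

/-- The canonical projection `π : A → E` on points. -/
def piPoint (I : P → L → Prop) (P' : Set P) : APoint P' → EPoint I P' :=
  fun x => ⟨subtendedOvoid I P' x.1, x.1, x.2, rfl⟩

/-- The canonical projection `π : A → E` on lines. -/
def piLine (I : P → L → Prop) (P' : Set P) (L' : Set L) : ALine L' → ELine I P' L' :=
  fun l => ⟨rosette I P' l.1, l.1, l.2, rfl⟩

/-- A morphism of point-line geometries: preserves incidence. -/
def IsMorphism {P₁ L₁ P₂ L₂ : Type} (I₁ : P₁ → L₁ → Prop) (I₂ : P₂ → L₂ → Prop)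
    (fp : P₁ → P₂) (fl : L₁ → L₂) : Prop :=
  ∀ x l, I₁ x l → I₂ (fp x) (fl l)

/-- A cover: a morphism which is locally bijective, i.e. for every point `x` it induces
a bijection between the lines through `x` and the lines through `fp x`, and dually. -/
def IsCover {P₁ L₁ P₂ L₂ : Type} (I₁ : P₁ → L₁ → Prop) (I₂ : P₂ → L₂ → Prop)
    (fp : P₁ → P₂) (fl : L₁ → L₂) : Prop :=
  IsMorphism I₁ I₂ fp fl ∧
  (∀ (x : P₁) (m : L₂), I₂ (fp x) m → ∃! l : L₁, I₁ x l ∧ fl l = m) ∧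
  (∀ (l : L₁) (y : P₂), I₂ y (fl l) → ∃! x : P₁, I₁ x l ∧ fp x = y)

/-- An isomorphism of point-line geometries: a bijective morphism whose inverse is a
morphism, equivalently a pair of bijections under which incidence corresponds. -/
def IsIso {P₁ L₁ P₂ L₂ : Type} (I₁ : P₁ → L₁ → Prop) (I₂ : P₂ → L₂ → Prop)
    (fp : P₁ → P₂) (fl : L₁ → L₂) : Prop :=
  Function.Bijective fp ∧ Function.Bijective fl ∧
  ∀ (x : P₁) (l : L₁), I₁ x l ↔ I₂ (fp x) (fl l)

/-- An automorphism of a point-line geometry. -/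
def IsAuto (I : P → L → Prop) (fp : P → P) (fl : L → L) : Prop :=
  IsIso I I fp fl

/-- A finite GQ has order `(s, t)` if every line carries `s + 1` points and every point
carries `t + 1` lines. -/
def HasOrder (I : P → L → Prop) (s t : ℕ) : Prop :=
  (∀ l : L, {x : P | I x l}.ncard = s + 1) ∧
  (∀ x : P, {l : L | I x l}.ncard = t + 1)

/-- Every subtended ovoid of `S'` is subtended by exactly `θ` external points. -/
def AllThetaSubtended (I : P → L → Prop) (P' : Set P) (θ : ℕ) : Prop :=
  ∀ x : P, x ∉ P' →
    {y : P | y ∉ P' ∧ subtendedOvoid I P' y = subtendedOvoid I P' x}.ncard = θ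

/-- The perp of a set of points: all points collinear with every point of the set. -/
def perpSet (I : P → L → Prop) (X : Set P) : Set P :=
  {z : P | ∀ y ∈ X, Collinear I z y}

/-- The action of a permutation of the points of `S'` on subsets of `P'`. -/
def ovMap (P' : Set P) (f : ↥P' → ↥P') (O : Set P) : Set P :=
  {z : P | ∃ y : ↥P', y.1 ∈ O ∧ (f y).1 = z}

open Set

section Counting

variable {α β : Type*}

theorem ncard_setOf_eq_one {p : α → Prop} (h : ∃! a, p a) : {a | p a}.ncard = 1 := by
  obtain ⟨a, ha, hu⟩ := h
  exact ncard_eq_one.mpr ⟨a, ext fun b => ⟨hu b, fun hb => hb ▸ ha⟩⟩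

theorem ncard_mul_eq_ncard_mul {A : Set α} {B : Set β} (hA : A.Finite) (hB : B.Finite)
    (r : α → β → Prop) {m n : ℕ} (hm : ∀ a ∈ A, {b ∈ B | r a b}.ncard = m)
    (hn : ∀ b ∈ B, {a ∈ A | r a b}.ncard = n) : A.ncard * m = B.ncard * n := by
  classical
  lift A to Finset α using hA
  lift B to Finset β using hB
  simp only [ncard_coe_finset]
  refine Finset.card_mul_eq_card_mul r (fun a ha => ?_) (fun b hb => ?_)
  · simp only [← hm a ha, Finset.bipartiteAbove, ← ncard_coe_finset, Finset.coe_filter,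
      Finset.mem_coe]
  · simp only [← hn b hb, Finset.bipartiteBelow, ← ncard_coe_finset, Finset.coe_filter,
      Finset.mem_coe]

theorem sum_ncard_sep_eq_ncard_mul [Fintype α] {B : Set β} (hB : B.Finite)
    (r : α → β → Prop) {n : ℕ} (hn : ∀ b ∈ B, {a | r a b}.ncard = n) :
    ∑ a, {b ∈ B | r a b}.ncard = B.ncard * n := by
  classical
  lift B to Finset β using hB
  have hcomm := Finset.sum_card_bipartiteAbove_eq_sum_card_bipartiteBelow
    (s := Finset.univ) (t := B) (r := r)
  simp only [Finset.bipartiteAbove, Finset.bipartiteBelow, ← ncard_coe_finset,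
    Finset.coe_filter, Finset.mem_univ, true_and] at hcomm
  simp only [Finset.mem_coe]
  rw [hcomm, Finset.sum_congr rfl hn, Finset.sum_const, smul_eq_mul, ncard_coe_finset]

theorem ncard_offDiag_add_ncard {X : Set α} (hX : X.Finite) :
    X.offDiag.ncard + X.ncard = X.ncard ^ 2 := by
  classical
  lift X to Finset α using hX
  rw [← Finset.coe_offDiag, ncard_coe_finset, ncard_coe_finset, Finset.offDiag_card, sq]
  have := Nat.le_mul_self X.card
  omega

theorem sum_toFinset_eq_ncard_mul [Fintype α] {A : Set α} [Fintype A] {f : α → ℤ} {c : ℤ}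
    (h : ∀ a ∈ A, f a = c) : ∑ a ∈ A.toFinset, f a = A.ncard * c := by
  rw [Finset.sum_congr rfl fun a ha => h a (mem_toFinset.mp ha), Finset.sum_const,
    nsmul_eq_mul, ncard_eq_toFinset_card']

end Counting

section Quadrangle

variable {I : P → L → Prop}

theorem collinear_refl (I : P → L → Prop) (a : P) : Collinear I a a := Or.inl rfl

theorem Collinear.symm {a b : P} (h : Collinear I a b) : Collinear I b a := by
  rcases h with rfl | ⟨l, hal, hbl⟩
  · exact Or.inl rfl
  · exact Or.inr ⟨l, hbl, hal⟩

theorem collinear_comm {a b : P} : Collinear I a b ↔ Collinear I b a :=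
  ⟨Collinear.symm, Collinear.symm⟩

theorem Collinear.exists_line {a b : P} (h : Collinear I a b) (hne : a ≠ b) :
    ∃ l, I a l ∧ I b l :=
  h.resolve_left hne

namespace IsGQ

theorem eq_of_incident (hGQ : IsGQ I) {a b : P} (hab : a ≠ b) {l m : L} (hal : I a l)
    (hbl : I b l) (ham : I a m) (hbm : I b m) : l = m :=
  hGQ.1 a b hab l m hal hbl ham hbm

theorem existsUnique_incident_collinear (hGQ : IsGQ I) {z : P} {l : L} (h : ¬ I z l) :
    ∃! y, I y l ∧ Collinear I z y := by
  obtain ⟨⟨p, m⟩, ⟨hzm, hpm, hpl⟩, hu⟩ := hGQ.2 z l h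
  refine ⟨p, ⟨hpl, Or.inr ⟨m, hzm, hpm⟩⟩, ?_⟩
  rintro y ⟨hyl, rfl | ⟨n, hzn, hyn⟩⟩
  · exact absurd hyl h
  · exact congrArg Prod.fst (hu (y, n) ⟨hzn, hyn, hyl⟩)

theorem eq_of_incident_collinear (hGQ : IsGQ I) {z : P} {l : L} (h : ¬ I z l) {y y' : P}
    (hyl : I y l) (hy'l : I y' l) (hy : Collinear I z y) (hy' : Collinear I z y') :
    y = y' :=
  (hGQ.existsUnique_incident_collinear h).unique ⟨hyl, hy⟩ ⟨hy'l, hy'⟩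

theorem collinear_and_collinear_iff (hGQ : IsGQ I) {a b : P} (hab : a ≠ b) {l : L}
    (hal : I a l) (hbl : I b l) {w : P} :
    Collinear I a w ∧ Collinear I b w ↔ I w l := by
  refine ⟨fun ⟨haw, hbw⟩ => ?_, fun hwl => ⟨Or.inr ⟨l, hal, hwl⟩, Or.inr ⟨l, hbl, hwl⟩⟩⟩
  by_contra hwl
  exact hab (hGQ.eq_of_incident_collinear hwl hal hbl haw.symm hbw.symm)

variable [Finite P] [Finite L] {s t : ℕ}

theorem ncard_collinear_ne (hGQ : IsGQ I) (hOrd : HasOrder I s t) (a : P) :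
    {w | Collinear I a w ∧ w ≠ a}.ncard = s * (t + 1) := by
  have hflags : {w | Collinear I a w ∧ w ≠ a}.ncard * 1 = {l | I a l}.ncard * s := by
    refine ncard_mul_eq_ncard_mul (toFinite _) (toFinite _) (fun w l => I w l)
      (fun w ⟨haw, hwa⟩ => ncard_setOf_eq_one ?_) (fun l hal => ?_)
    · obtain ⟨l, hal, hwl⟩ := haw.exists_line (Ne.symm hwa)
      exact ⟨l, ⟨hal, hwl⟩, fun m ⟨ham, hwm⟩ => hGQ.eq_of_incident hwa hwm ham hwl hal⟩
    · have hline : {w ∈ {w | Collinear I a w ∧ w ≠ a} | I w l} = {w | I w l} \ {a} := by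
        ext w
        exact ⟨fun ⟨⟨_, hwa⟩, hwl⟩ => ⟨hwl, hwa⟩,
          fun ⟨hwl, hwa⟩ => ⟨⟨Or.inr ⟨l, hal, hwl⟩, hwa⟩, hwl⟩⟩
      rw [hline, ncard_sdiff_singleton_of_mem (show a ∈ {w | I w l} from hal), hOrd.1 l,
        Nat.add_sub_cancel]
  rw [mul_one, hOrd.2 a, mul_comm] at hflags
  exact hflags

theorem ncard_collinear (hGQ : IsGQ I) (hOrd : HasOrder I s t) (a : P) :
    {w | Collinear I a w}.ncard = 1 + s * (t + 1) := by
  have hsplit : {w | Collinear I a w} = insert a {w | Collinear I a w ∧ w ≠ a} := by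
    ext w
    by_cases hwa : w = a <;> simp [hwa, collinear_refl]
  rw [hsplit, ncard_insert_of_notMem (fun h => h.2 rfl), hGQ.ncard_collinear_ne hOrd, add_comm]

theorem ncard_collinear_collinear (hGQ : IsGQ I) (hOrd : HasOrder I s t) {a b : P}
    (hab : ¬ Collinear I a b) :
    {w | Collinear I a w ∧ Collinear I b w}.ncard = t + 1 := by
  have hmatch := ncard_mul_eq_ncard_mul (toFinite {w | Collinear I a w ∧ Collinear I b w})
    (toFinite {l | I a l}) (fun w l => I w l) (m := 1) (n := 1)
    (fun w ⟨haw, hbw⟩ => ncard_setOf_eq_one ?_) (fun l hal => ncard_setOf_eq_one ?_)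
  · rw [mul_one, mul_one] at hmatch
    rw [hmatch, hOrd.2 a]
  · have hwa : a ≠ w := by rintro rfl; exact hab hbw.symm
    obtain ⟨l, hal, hwl⟩ := haw.exists_line hwa
    exact ⟨l, ⟨hal, hwl⟩, fun m ⟨ham, hwm⟩ => hGQ.eq_of_incident hwa ham hwm hal hwl⟩
  · have hbl : ¬ I b l := fun hbl => hab (Or.inr ⟨l, hal, hbl⟩)
    obtain ⟨w, ⟨hwl, hbw⟩, hu⟩ := hGQ.existsUnique_incident_collinear hbl
    exact ⟨w, ⟨⟨Or.inr ⟨l, hal, hwl⟩, hbw⟩, hwl⟩, fun w' ⟨⟨_, hbw'⟩, hw'l⟩ => hu w' ⟨hw'l, hbw'⟩⟩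

-- Double count collinear pairs `(b, c)` with `b ∉ a⊥` and `c ∈ a⊥ \ {a}`.
theorem natCard_eq (hGQ : IsGQ I) (hOrd : HasOrder I s t) [Nonempty P] :
    Nat.card P = (s + 1) * (s * t + 1) := by
  obtain ⟨a⟩ := ‹Nonempty P›
  have hfar : {b | ¬ Collinear I a b}.ncard * (t + 1)
      = {c | Collinear I a c ∧ c ≠ a}.ncard * (s * t) := by
    refine ncard_mul_eq_ncard_mul (toFinite _) (toFinite _) (fun b c => Collinear I b c)
      (fun b hab => ?_) (fun c ⟨hac, hca⟩ => ?_)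
    · rw [← hGQ.ncard_collinear_collinear hOrd hab]
      congr 1
      ext c
      refine ⟨fun ⟨⟨hac, _⟩, hbc⟩ => ⟨hac, hbc⟩, fun ⟨hac, hbc⟩ => ⟨⟨hac, ?_⟩, hbc⟩⟩
      rintro rfl
      exact hab hbc.symm
    · obtain ⟨l, hal, hcl⟩ := hac.exists_line (Ne.symm hca)
      have hfib : {b ∈ {b | ¬ Collinear I a b} | Collinear I b c}
          = {w | Collinear I c w} \ {w | I w l} := by
        ext w
        simp only [mem_ofPred_eq, mem_sdiff]
        rw [← hGQ.collinear_and_collinear_iff (Ne.symm hca) hal hcl, collinear_comm (a := w)]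
        tauto
      have hline : {w | I w l} ⊆ {w | Collinear I c w} := fun w hwl => Or.inr ⟨l, hcl, hwl⟩
      rw [hfib, ncard_sdiff hline, hGQ.ncard_collinear hOrd, hOrd.1 l,
        Nat.sub_eq_iff_eq_add (by nlinarith)]
      ring
  rw [hGQ.ncard_collinear_ne hOrd a, mul_comm s, mul_assoc, mul_comm (t + 1)] at hfar
  rw [← ncard_add_ncard_compl {w | Collinear I a w}]
  change _ + {b | ¬ Collinear I a b}.ncard = _
  rw [hGQ.ncard_collinear hOrd, Nat.eq_of_mul_eq_mul_right (Nat.succ_pos t) hfar]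
  ring

theorem sum_ncard_collinear [Fintype P] (hGQ : IsGQ I) (hOrd : HasOrder I s t) (X : Set P) :
    ∑ u, {y ∈ X | Collinear I u y}.ncard = X.ncard * (1 + s * (t + 1)) :=
  sum_ncard_sep_eq_ncard_mul (toFinite X) _ fun y _ => by
    rw [← hGQ.ncard_collinear hOrd y]
    exact congrArg ncard (ext fun _ => collinear_comm)

-- `k (k - 1)` counts ordered pairs of distinct points of `X` collinear with `u`, and each such
-- pair of non-collinear points is collinear with exactly `t + 1` points.
theorem sum_ncard_collinear_sq [Fintype P] (hGQ : IsGQ I) (hOrd : HasOrder I s t) {X : Set P}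
    (hX : ∀ y ∈ X, ∀ y' ∈ X, y ≠ y' → ¬ Collinear I y y') :
    ∑ u, {y ∈ X | Collinear I u y}.ncard ^ 2
      = ∑ u, {y ∈ X | Collinear I u y}.ncard + X.offDiag.ncard * (t + 1) := by
  have hpairs : ∑ u, {p ∈ X.offDiag | Collinear I u p.1 ∧ Collinear I u p.2}.ncard
      = X.offDiag.ncard * (t + 1) :=
    sum_ncard_sep_eq_ncard_mul (toFinite _) _ fun p ⟨hp₁, hp₂, hne⟩ => by
      rw [← hGQ.ncard_collinear_collinear hOrd (hX _ hp₁ _ hp₂ hne)]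
      exact congrArg ncard (ext fun _ => and_congr collinear_comm collinear_comm)
  rw [← hpairs, ← Finset.sum_add_distrib]
  refine Finset.sum_congr rfl fun u _ => ?_
  rw [← ncard_offDiag_add_ncard (toFinite _), add_comm]
  congr 2
  ext p
  simp only [mem_offDiag, mem_ofPred_eq]
  tauto

theorem sum_sq_sub_ncard_collinear [Fintype P] [Nonempty P] (hGQ : IsGQ I)
    (hOrd : HasOrder I s t) {X : Set P}
    (hX : ∀ y ∈ X, ∀ y' ∈ X, y ≠ y' → ¬ Collinear I y y') (a : ℤ) :
    ∑ u, (({y ∈ X | Collinear I u y}.ncard : ℤ) - a) ^ 2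
      = (1 - 2 * a) * X.ncard * (1 + s * (t + 1)) + X.offDiag.ncard * (t + 1)
        + a ^ 2 * ((s + 1) * (s * t + 1)) := by
  have hcard := hGQ.natCard_eq hOrd
  rw [Nat.card_eq_fintype_card] at hcard
  simp only [sub_sq, Finset.sum_add_distrib, Finset.sum_sub_distrib, mul_assoc,
    ← Finset.mul_sum, ← Finset.sum_mul, ← Nat.cast_pow, ← Nat.cast_sum,
    hGQ.sum_ncard_collinear_sq hOrd hX, hGQ.sum_ncard_collinear hOrd X, Finset.sum_const,
    Finset.card_univ, hcard, nsmul_eq_mul]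
  push_cast
  ring

end IsGQ

end Quadrangle

structure IsFullSubGQ (I : P → L → Prop) (P' : Set P) (L' : Set L) (s t' : ℕ) : Prop where
  isGQ : IsGQ I
  isGQ_sub : IsGQ (SubIncid I P' L')
  hasOrder_sub : HasOrder (SubIncid I P' L') s t'
  isFull : IsFull I P' L'

namespace IsFullSubGQ

variable {I : P → L → Prop} {P' : Set P} {L' : Set L} {s t' : ℕ}

theorem isOvoid_subtendedOvoid (hS : IsFullSubGQ I P' L' s t') {x : P} (hx : x ∉ P') :
    IsOvoid I P' L' (subtendedOvoid I P' x) := by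
  refine ⟨fun y hy => hy.1, fun m hm => ?_⟩
  have hxm : ¬ I x m := fun h => hx (hS.isFull m hm x h)
  obtain ⟨y, ⟨hym, hxy⟩, hu⟩ := hS.isGQ.existsUnique_incident_collinear hxm
  exact ⟨y, ⟨⟨hS.isFull m hm y hym, hxy⟩, hym⟩, fun y' ⟨⟨_, hxy'⟩, hy'm⟩ => hu y' ⟨hy'm, hxy'⟩⟩

-- Take a line `m` of `S'` on `y` missing `y'`; inside `S'` the projection of `y'` onto `m`
-- is `y` itself, so `n` is the line of `S'` joining `y'` to it.
theorem mem_of_incident [Finite L] (hS : IsFullSubGQ I P' L' s t') (ht' : 0 < t') {y y' : P}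
    (hy : y ∈ P') (hy' : y' ∈ P') (hne : y ≠ y') {n : L} (hyn : I y n) (hy'n : I y' n) :
    n ∈ L' := by
  obtain ⟨m, hym, hy'm⟩ : ∃ m : L', I y m ∧ ¬ I y' m := by
    have h2 : 1 < {m : L' | SubIncid I P' L' ⟨y, hy⟩ m}.ncard := by
      rw [hS.hasOrder_sub.2 ⟨y, hy⟩]
      omega
    obtain ⟨m₁, m₂, hm₁, hm₂, hm⟩ := (one_lt_ncard_iff).mp h2
    by_contra! h
    exact hm (Subtype.ext (hS.isGQ.eq_of_incident hne hm₁ (h m₁ hm₁) hm₂ (h m₂ hm₂)))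
  obtain ⟨⟨p, m'⟩, ⟨hy'm', hpm', hpm⟩, -⟩ := hS.isGQ_sub.2 ⟨y', hy'⟩ m hy'm
  have hpy : p.1 = y := hS.isGQ.eq_of_incident_collinear hy'm hpm hym
    (Or.inr ⟨m', hy'm', hpm'⟩) (Or.inr ⟨n, hy'n, hyn⟩)
  rw [hS.isGQ.eq_of_incident (Ne.symm hne) hy'n hyn hy'm' (hpy ▸ hpm')]
  exact m'.2

theorem collinear_sub_iff [Finite L] (hS : IsFullSubGQ I P' L' s t') (ht' : 0 < t')
    (a b : P') : Collinear (SubIncid I P' L') a b ↔ Collinear I a.1 b.1 := by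
  refine ⟨fun h => ?_, fun h => ?_⟩
  · rcases h with rfl | ⟨l, hal, hbl⟩
    · exact collinear_refl I _
    · exact Or.inr ⟨l, hal, hbl⟩
  · by_cases hab : a = b
    · exact Or.inl hab
    obtain ⟨n, han, hbn⟩ := h.exists_line (Subtype.coe_ne_coe.mpr hab)
    exact Or.inr ⟨⟨n, hS.mem_of_incident ht' a.2 b.2 (Subtype.coe_ne_coe.mpr hab) han hbn⟩,
      han, hbn⟩

theorem eq_of_incident_of_not_mem [Finite L] (hS : IsFullSubGQ I P' L' s t') (ht' : 0 < t') {x : P}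
    (hx : x ∉ P') {l : L} (hxl : I x l) {y y' : P} (hy : y ∈ P') (hy' : y' ∈ P')
    (hyl : I y l) (hy'l : I y' l) : y = y' := by
  by_contra hne
  exact hx (hS.isFull l (hS.mem_of_incident ht' hy hy' hne hyl hy'l) x hxl)

variable [Finite P] [Finite L]

theorem ncard_eq (hS : IsFullSubGQ I P' L' s t') (hne : P'.Nonempty) :
    P'.ncard = (s + 1) * (s * t' + 1) := by
  have := hne.to_subtype
  rw [← Nat.card_coe_set_eq, hS.isGQ_sub.natCard_eq hS.hasOrder_sub]

theorem ncard_collinear (hS : IsFullSubGQ I P' L' s t') (ht' : 0 < t') {y : P} (hy : y ∈ P') :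
    {w ∈ P' | Collinear I y w}.ncard = 1 + s * (t' + 1) := by
  rw [← hS.isGQ_sub.ncard_collinear hS.hasOrder_sub ⟨y, hy⟩,
    ← ncard_image_of_injective _ Subtype.val_injective]
  congr 1
  ext w
  constructor
  · rintro ⟨hw, hyw⟩
    exact ⟨⟨w, hw⟩, (hS.collinear_sub_iff ht' _ _).2 hyw, rfl⟩
  · rintro ⟨w, hyw, rfl⟩
    exact ⟨w.2, (hS.collinear_sub_iff ht' _ _).1 hyw⟩

end IsFullSubGQ

namespace IsOvoid

variable {I : P → L → Prop} {P' : Set P} {L' : Set L} {s t' : ℕ} {O : Set P}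

theorem not_collinear [Finite L] (hO : IsOvoid I P' L' O) (hS : IsFullSubGQ I P' L' s t')
    (ht' : 0 < t') {y y' : P} (hy : y ∈ O) (hy' : y' ∈ O) (hne : y ≠ y') : ¬ Collinear I y y' := by
  rintro (h | ⟨n, hyn, hy'n⟩)
  · exact hne h
  · have hn := hS.mem_of_incident ht' (hO.1 hy) (hO.1 hy') hne hyn hy'n
    exact hne ((hO.2 n hn).unique ⟨hy, hyn⟩ ⟨hy', hy'n⟩)

theorem ncard_sep_collinear_of_mem [Finite L] (hO : IsOvoid I P' L' O)
    (hS : IsFullSubGQ I P' L' s t') (ht' : 0 < t') {u : P} (hu : u ∈ O) :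
    {y ∈ O | Collinear I u y}.ncard = 1 :=
  ncard_setOf_eq_one ⟨u, ⟨hu, collinear_refl I u⟩, fun _ ⟨hy, huy⟩ => by_contra fun hyu =>
    hO.not_collinear hS ht' hu hy (Ne.symm hyu) huy⟩

variable [Finite P] [Finite L]

theorem ncard_collinear_of_not_mem (hO : IsOvoid I P' L' O) (hS : IsFullSubGQ I P' L' s t')
    (ht' : 0 < t') {u : P} (hu : u ∈ P') (huO : u ∉ O) :
    {y ∈ O | Collinear I u y}.ncard = t' + 1 := by
  have hmatch := ncard_mul_eq_ncard_mul (toFinite {y ∈ O | Collinear I u y})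
    (toFinite {m : L' | SubIncid I P' L' ⟨u, hu⟩ m}) (fun y m => I y m) (m := 1) (n := 1)
    (fun y ⟨hyO, huy⟩ => ncard_setOf_eq_one ?_) (fun m hum => ncard_setOf_eq_one ?_)
  · rw [mul_one, mul_one, hS.hasOrder_sub.2] at hmatch
    exact hmatch
  · have hne : u ≠ y := fun h => huO (h ▸ hyO)
    obtain ⟨n, hun, hyn⟩ := huy.exists_line hne
    refine ⟨⟨n, hS.mem_of_incident ht' hu (hO.1 hyO) hne hun hyn⟩, ⟨hun, hyn⟩, ?_⟩
    exact fun m ⟨hum, hym⟩ => Subtype.ext (hS.isGQ.eq_of_incident hne hum hym hun hyn)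
  · obtain ⟨y, ⟨hyO, hym⟩, hu⟩ := hO.2 m m.2
    exact ⟨y, ⟨⟨hyO, Or.inr ⟨m, hum, hym⟩⟩, hym⟩, fun y' ⟨⟨hy'O, _⟩, hy'm⟩ => hu y' ⟨hy'O, hy'm⟩⟩

theorem ncard_eq (hO : IsOvoid I P' L' O) (hS : IsFullSubGQ I P' L' s t') (ht' : 0 < t')
    (hne : P'.Nonempty) : O.ncard = s * t' + 1 := by
  have hcount := ncard_mul_eq_ncard_mul (toFinite O) (toFinite (P' \ O))
    (fun y w => Collinear I y w) (m := s * (t' + 1)) (n := t' + 1)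
    (fun y hyO => ?_) (fun w ⟨hw, hwO⟩ => ?_)
  · have hsplit := ncard_sdiff_add_ncard_of_subset hO.1 (toFinite P')
    rw [hS.ncard_eq hne] at hsplit
    rw [← mul_assoc, mul_comm _ s] at hcount
    have hout := Nat.eq_of_mul_eq_mul_right (Nat.succ_pos t') hcount
    nlinarith
  · have hfib : {w ∈ P' \ O | Collinear I y w} = {w ∈ P' | Collinear I y w} \ {y} := by
      ext w
      simp only [mem_sdiff, mem_ofPred_eq, mem_singleton_iff]
      refine ⟨fun ⟨⟨hw, hwO⟩, hyw⟩ => ⟨⟨hw, hyw⟩, fun h => hwO (h ▸ hyO)⟩,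
        fun ⟨⟨hw, hyw⟩, hwy⟩ => ⟨⟨hw, fun hwO => ?_⟩, hyw⟩⟩
      exact hO.not_collinear hS ht' hyO hwO (Ne.symm hwy) hyw
    have hy : y ∈ {w ∈ P' | Collinear I y w} := ⟨hO.1 hyO, collinear_refl I y⟩
    rw [hfib, ncard_sdiff_singleton_of_mem hy,
      hS.ncard_collinear ht' (hO.1 hyO), Nat.add_sub_cancel_left]
  · rw [← hO.ncard_collinear_of_not_mem hS ht' hw hwO]
    exact congrArg ncard (ext fun _ => and_congr_right fun _ => collinear_comm)

end IsOvoid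

theorem IsGQ.subtendedOvoid_inter_eq {I : P → L → Prop} (hGQ : IsGQ I) (P' : Set P) {u z : P}
    (hne : u ≠ z) {l : L} (hul : I u l) (hzl : I z l) :
    subtendedOvoid I P' u ∩ subtendedOvoid I P' z = {y ∈ P' | I y l} := by
  ext y
  simp only [subtendedOvoid, mem_inter_iff, mem_ofPred_eq,
    ← hGQ.collinear_and_collinear_iff hne hul hzl]
  tauto

theorem inter_subtendedOvoid_eq_sep {I : P → L → Prop} {P' X : Set P} (hX : X ⊆ P') (u : P) :
    X ∩ subtendedOvoid I P' u = {y ∈ X | Collinear I u y} :=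
  ext fun _ => ⟨fun ⟨hy, _, huy⟩ => ⟨hy, huy⟩, fun ⟨hy, huy⟩ => ⟨hy, hX hy, huy⟩⟩

namespace IsFullSubGQ

variable {I : P → L → Prop} {P' : Set P} {L' : Set L} {s t' : ℕ} [Finite P] [Finite L]

theorem existsUnique_mem_incident (hS : IsFullSubGQ I P' L' s t') (ht' : 0 < t')
    (hOrd : HasOrder I s (s * t')) (hne : P'.Nonempty) {x : P} (hx : x ∉ P') {l : L}
    (hxl : I x l) : ∃! y, y ∈ P' ∧ I y l := by
  set T := {l | I x l ∧ ∃ y ∈ P', I y l}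
  have hmatch := ncard_mul_eq_ncard_mul (toFinite (subtendedOvoid I P' x)) (toFinite T)
    (fun y l => I y l) (m := 1) (n := 1)
    (fun y ⟨hy, hxy⟩ => ncard_setOf_eq_one ?_) (fun m ⟨hxm, y, hy, hym⟩ => ncard_setOf_eq_one ?_)
  · have hT : T = {l | I x l} := by
      refine eq_of_subset_of_ncard_le (fun l hl => hl.1) ?_ (toFinite _)
      rw [hOrd.2 x, ← mul_one T.ncard, ← hmatch, mul_one,
        (hS.isOvoid_subtendedOvoid hx).ncard_eq hS ht' hne]
    obtain ⟨-, y, hy, hyl⟩ : l ∈ T := hT ▸ hxl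
    exact ⟨y, ⟨hy, hyl⟩, fun y' ⟨hy', hy'l⟩ =>
      hS.eq_of_incident_of_not_mem ht' hx hxl hy' hy hy'l hyl⟩
  · have hne : x ≠ y := fun h => hx (h ▸ hy)
    obtain ⟨m, hxm, hym⟩ := hxy.exists_line hne
    exact ⟨m, ⟨⟨hxm, y, hy, hym⟩, hym⟩, fun m' ⟨⟨hxm', _⟩, hym'⟩ =>
      hS.isGQ.eq_of_incident hne hxm' hym' hxm hym⟩
  · exact ⟨y, ⟨⟨hy, Or.inr ⟨m, hxm, hym⟩⟩, hym⟩, fun y' ⟨⟨hy', _⟩, hy'm⟩ =>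
      hS.eq_of_incident_of_not_mem ht' hx hxm hy' hy hy'm hym⟩

theorem ncard_subtendedOvoid_inter (hS : IsFullSubGQ I P' L' s t') (ht' : 0 < t')
    (hOrd : HasOrder I s (s * t')) (hne : P'.Nonempty) {u z : P} (hu : u ∉ P') (huz : u ≠ z)
    (hc : Collinear I u z) : (subtendedOvoid I P' u ∩ subtendedOvoid I P' z).ncard = 1 := by
  obtain ⟨l, hul, hzl⟩ := hc.exists_line huz
  rw [hS.isGQ.subtendedOvoid_inter_eq P' huz hul hzl]
  exact ncard_setOf_eq_one (hS.existsUnique_mem_incident ht' hOrd hne hu hul)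

theorem perpSet_subtendedOvoid (hS : IsFullSubGQ I P' L' s t') (ht' : 0 < t') (hs : 1 < s)
    (hne : P'.Nonempty) {x : P} (hx : x ∉ P') :
    perpSet I (subtendedOvoid I P' x)
      = {z | z ∉ P' ∧ subtendedOvoid I P' z = subtendedOvoid I P' x} := by
  have hO := hS.isOvoid_subtendedOvoid hx
  have hcard := hO.ncard_eq hS ht' hne
  ext w
  constructor
  · intro hw
    have hwP : w ∉ P' := by
      intro hwP
      by_cases hwO : w ∈ subtendedOvoid I P' x
      · obtain ⟨y, hy, hyw⟩ := exists_ne_of_one_lt_ncard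
          (show 1 < (subtendedOvoid I P' x).ncard by rw [hcard]; nlinarith) w
        exact hO.not_collinear hS ht' hwO hy hyw.symm (hw y hy)
      · have h := hO.ncard_collinear_of_not_mem hS ht' hwP hwO
        rw [sep_eq_self_iff_mem_true.mpr hw, hcard] at h
        nlinarith
    have hsub : subtendedOvoid I P' x ⊆ subtendedOvoid I P' w := fun y hy => ⟨hy.1, hw y hy⟩
    refine ⟨hwP, (eq_of_subset_of_ncard_le hsub ?_ (toFinite _)).symm⟩
    rw [hcard, (hS.isOvoid_subtendedOvoid hwP).ncard_eq hS ht' hne]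
  · rintro ⟨-, hwx⟩ y hy
    rw [← hwx] at hy
    exact hy.2

theorem not_collinear_of_mem_perpSet (hS : IsFullSubGQ I P' L' s t') (ht' : 0 < t')
    (hs : 1 < s) (hOrd : HasOrder I s (s * t')) (hne : P'.Nonempty) {x : P} (hx : x ∉ P')
    {z z' : P} (hz : z ∈ perpSet I (subtendedOvoid I P' x))
    (hz' : z' ∈ perpSet I (subtendedOvoid I P' x)) (hzz' : z ≠ z') : ¬ Collinear I z z' := by
  rw [hS.perpSet_subtendedOvoid ht' hs hne hx] at hz hz'
  intro hc
  have h := hS.ncard_subtendedOvoid_inter ht' hOrd hne hz.1 hzz' hc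
  rw [hz.2, hz'.2, inter_self, (hS.isOvoid_subtendedOvoid hx).ncard_eq hS ht' hne] at h
  nlinarith

theorem eq_of_collinear_mem_perpSet (hS : IsFullSubGQ I P' L' s t') (ht' : 0 < t')
    (hs : 1 < s) (hOrd : HasOrder I s (s * t')) (hne : P'.Nonempty) {x u z z' : P}
    (hx : x ∉ P') (hu : u ∉ P') (hup : u ∉ perpSet I (subtendedOvoid I P' x))
    (hz : z ∈ perpSet I (subtendedOvoid I P' x)) (hz' : z' ∈ perpSet I (subtendedOvoid I P' x))
    (huz : Collinear I u z) (huz' : Collinear I u z') : z = z' := by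
  have huz₀ : u ≠ z := by rintro rfl; exact hup hz
  have huz'₀ : u ≠ z' := by rintro rfl; exact hup hz'
  obtain ⟨l, hul, hzl⟩ := huz.exists_line huz₀
  obtain ⟨l', hul', hz'l'⟩ := huz'.exists_line huz'₀
  have hsame : {y ∈ P' | I y l} = {y ∈ P' | I y l'} := by
    rw [hS.perpSet_subtendedOvoid ht' hs hne hx] at hz hz'
    rw [← hS.isGQ.subtendedOvoid_inter_eq P' huz₀ hul hzl,
      ← hS.isGQ.subtendedOvoid_inter_eq P' huz'₀ hul' hz'l', hz.2, hz'.2]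
  obtain ⟨p, ⟨hp, hpl⟩, -⟩ := hS.existsUnique_mem_incident ht' hOrd hne hu hul
  have hpl' : I p l' := (hsame ▸ ⟨hp, hpl⟩ : p ∈ {y ∈ P' | I y l'}).2
  have hpu : p ≠ u := by rintro rfl; exact hu hp
  have hll' : l = l' := hS.isGQ.eq_of_incident hpu hpl hul hpl' hul'
  by_contra hzz'
  exact hS.not_collinear_of_mem_perpSet ht' hs hOrd hne hx hz hz' hzz'
    (Or.inr ⟨l, hzl, hll' ▸ hz'l'⟩)

theorem ncard_inter_of_collinear_mem_perpSet (hS : IsFullSubGQ I P' L' s t') (ht' : 0 < t')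
    (hs : 1 < s) (hOrd : HasOrder I s (s * t')) (hne : P'.Nonempty) {x u z : P} (hx : x ∉ P')
    (hu : u ∉ P') (hup : u ∉ perpSet I (subtendedOvoid I P' x))
    (hz : z ∈ perpSet I (subtendedOvoid I P' x)) (huz : Collinear I u z) :
    (subtendedOvoid I P' x ∩ subtendedOvoid I P' u).ncard = 1 := by
  have huz₀ : u ≠ z := by rintro rfl; exact hup hz
  rw [hS.perpSet_subtendedOvoid ht' hs hne hx] at hz
  rw [← hz.2, inter_comm]
  exact hS.ncard_subtendedOvoid_inter ht' hOrd hne hu huz₀ huz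

theorem ncard_collinear_perpSet (hS : IsFullSubGQ I P' L' s t') (ht' : 0 < t')
    (hs : 1 < s) (hOrd : HasOrder I s (s * t')) (hne : P'.Nonempty) {x : P} (hx : x ∉ P') :
    {u | u ∉ P' ∧ u ∉ perpSet I (subtendedOvoid I P' x) ∧
        ∃ z ∈ perpSet I (subtendedOvoid I P' x), Collinear I u z}.ncard
      = (perpSet I (subtendedOvoid I P' x)).ncard * ((s - 1) * (s * t' + 1)) := by
  have hΘ := hS.perpSet_subtendedOvoid ht' hs hne hx
  set Θ := perpSet I (subtendedOvoid I P' x)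
  have h := ncard_mul_eq_ncard_mul (toFinite {u | u ∉ P' ∧ u ∉ Θ ∧ ∃ z ∈ Θ, Collinear I u z})
    (toFinite Θ) (fun u z => Collinear I u z) (m := 1) (n := (s - 1) * (s * t' + 1))
    (fun u ⟨hu, huΘ, z, hz, huz⟩ => ncard_setOf_eq_one ⟨z, ⟨hz, huz⟩, fun z' ⟨hz', huz'⟩ =>
      hS.eq_of_collinear_mem_perpSet ht' hs hOrd hne hx hu huΘ hz' hz huz' huz⟩)
    (fun z hz => ?_)
  · rwa [mul_one] at h
  have hzx : z ∉ P' ∧ subtendedOvoid I P' z = subtendedOvoid I P' x := by rwa [hΘ] at hz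
  have hfib : {u ∈ {u | u ∉ P' ∧ u ∉ Θ ∧ ∃ z ∈ Θ, Collinear I u z} | Collinear I u z}
      = {w | Collinear I z w} \ insert z (subtendedOvoid I P' x) := by
    ext w
    simp only [mem_ofPred_eq, mem_sdiff, mem_insert_iff, not_or]
    constructor
    · rintro ⟨⟨hw, hwΘ, -⟩, hwz⟩
      exact ⟨hwz.symm, fun h => hwΘ (h ▸ hz), fun h => hw h.1⟩
    · rintro ⟨hzw, hwz, hwO⟩
      refine ⟨⟨fun hw => hwO ?_, fun hwΘ => ?_, z, hz, hzw.symm⟩, hzw.symm⟩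
      · rw [← hzx.2]
        exact ⟨hw, hzw⟩
      · exact hS.not_collinear_of_mem_perpSet ht' hs hOrd hne hx hz hwΘ (Ne.symm hwz) hzw
  have hsub : insert z (subtendedOvoid I P' x) ⊆ {w | Collinear I z w} := by
    rintro w (rfl | hw)
    · exact collinear_refl I w
    · exact hz w hw
  have hzO : z ∉ subtendedOvoid I P' x := fun h => hzx.1 h.1
  rw [hfib, ncard_sdiff hsub, ncard_insert_of_notMem hzO,
    (hS.isOvoid_subtendedOvoid hx).ncard_eq hS ht' hne, hS.isGQ.ncard_collinear hOrd]
  generalize s * t' + 1 = n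
  obtain ⟨r, rfl⟩ := Nat.exists_eq_add_of_lt hs
  simp only [Nat.add_sub_cancel, add_mul (1 + r) 1, one_mul]
  omega

theorem sum_sq_sub_ncard_collinear_eq (hS : IsFullSubGQ I P' L' s t') (ht' : 0 < t')
    (hOrd : HasOrder I s (s * t')) (hne : P'.Nonempty) [Fintype P] {x : P} (hx : x ∉ P')
    (hθ : (perpSet I (subtendedOvoid I P' x)).ncard * t' = s + t') :
    ∑ u, (({y ∈ subtendedOvoid I P' x | Collinear I u y}.ncard : ℤ) - (t' + 1)) ^ 2
      = ((s : ℤ) * t' + 1 + (perpSet I (subtendedOvoid I P' x)).ncard * ((s - 1) * (s * t' + 1)))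
          * t' ^ 2 + (perpSet I (subtendedOvoid I P' x)).ncard * ((s - 1) * t') ^ 2 := by
  have : Nonempty P := ⟨x⟩
  have hO := hS.isOvoid_subtendedOvoid hx
  have hOx := hO.ncard_eq hS ht' hne
  have hoff := ncard_offDiag_add_ncard (toFinite (subtendedOvoid I P' x))
  rw [hOx] at hoff
  have hoffz : ((subtendedOvoid I P' x).offDiag.ncard : ℤ) + (s * t' + 1) = (s * t' + 1) ^ 2 := by
    exact_mod_cast hoff
  have hθz : ((perpSet I (subtendedOvoid I P' x)).ncard : ℤ) * t' = s + t' := by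
    exact_mod_cast hθ
  rw [hS.isGQ.sum_sq_sub_ncard_collinear hOrd
    (fun y hy y' hy' hyy' => hO.not_collinear hS ht' hy hy' hyy') (t' + 1), hOx]
  push_cast
  rw [show ((subtendedOvoid I P' x).offDiag.ncard : ℤ) = (s * t' + 1) ^ 2 - (s * t' + 1) by
    linear_combination hoffz,
    show (s : ℤ) = (perpSet I (subtendedOvoid I P' x)).ncard * t' - t' by
    linear_combination -hθz]
  ring

theorem ncard_inter_of_forall_not_collinear (hS : IsFullSubGQ I P' L' s t') (ht' : 0 < t')
    (hs : 1 < s) (hOrd : HasOrder I s (s * t')) (hne : P'.Nonempty) {x x' : P} (hx : x ∉ P')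
    (hθ : (perpSet I (subtendedOvoid I P' x)).ncard * t' = s + t') (hx' : x' ∉ P')
    (hx'Θ : ∀ z ∈ perpSet I (subtendedOvoid I P' x), ¬ Collinear I x' z) :
    (subtendedOvoid I P' x ∩ subtendedOvoid I P' x').ncard = t' + 1 := by
  classical
  have := Fintype.ofFinite P
  have hO := hS.isOvoid_subtendedOvoid hx
  have hOx := hO.ncard_eq hS ht' hne
  have hC := hS.ncard_collinear_perpSet ht' hs hOrd hne hx
  have hΘ := hS.perpSet_subtendedOvoid ht' hs hne hx
  have htotal := hS.sum_sq_sub_ncard_collinear_eq ht' hOrd hne hx hθ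
  set Ox := subtendedOvoid I P' x
  set Θ := perpSet I Ox
  set C := {u | u ∉ P' ∧ u ∉ Θ ∧ ∃ z ∈ Θ, Collinear I u z}
  set f : P → ℤ := fun u => (({y ∈ Ox | Collinear I u y}.ncard : ℤ) - (t' + 1)) ^ 2 with hf
  have hOΘ : Disjoint Ox Θ := disjoint_left.mpr fun u hu huΘ => (hΘ ▸ huΘ).1 (hO.1 hu)
  have hOΘC : Disjoint (Ox ∪ Θ) C :=
    disjoint_left.mpr fun u hu ⟨huP, huΘ, _⟩ => hu.elim (fun hu => huP (hO.1 hu)) huΘ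
  have hN : ∑ u ∈ (Ox ∪ Θ ∪ C).toFinset, f u = Ox.ncard * (t' : ℤ) ^ 2
      + Θ.ncard * ((s * t' + 1 : ℕ) - (t' + 1 : ℤ)) ^ 2 + C.ncard * (t' : ℤ) ^ 2 := by
    rw [toFinset_union, toFinset_union, Finset.sum_union (by simpa using hOΘC),
      Finset.sum_union (disjoint_toFinset.mpr hOΘ),
      sum_toFinset_eq_ncard_mul (c := (t' : ℤ) ^ 2) fun u hu => by
        simp [hf, hO.ncard_sep_collinear_of_mem hS ht' hu],
      sum_toFinset_eq_ncard_mul (c := ((s * t' + 1 : ℕ) - (t' + 1 : ℤ)) ^ 2) fun u hu => by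
        simp [hf, sep_eq_self_iff_mem_true.mpr hu, hOx],
      sum_toFinset_eq_ncard_mul (c := (t' : ℤ) ^ 2) fun u huC => by
        obtain ⟨hu, huΘ, z, hz, huz⟩ := huC
        have h : (Ox ∩ subtendedOvoid I P' u).ncard = 1 :=
          hS.ncard_inter_of_collinear_mem_perpSet ht' hs hOrd hne hx hu huΘ hz huz
        simp [hf, ← inter_subtendedOvoid_eq_sep hO.1, h]]
  have hrest : ∑ u ∈ (Ox ∪ Θ ∪ C).toFinsetᶜ, f u = 0 := by
    have hsplit := Finset.sum_compl_add_sum (Ox ∪ Θ ∪ C).toFinset f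
    rw [hN, htotal, hC, hOx] at hsplit
    push_cast [Nat.cast_sub hs.le] at hsplit
    linear_combination hsplit
  have hx'N : x' ∈ (Ox ∪ Θ ∪ C).toFinsetᶜ := by
    simp only [Finset.mem_compl, mem_toFinset, mem_union, not_or]
    exact ⟨⟨fun h => hx' (hO.1 h), fun h => hx'Θ x' h (collinear_refl I x')⟩,
      fun ⟨_, _, z, hz, hx'z⟩ => hx'Θ z hz hx'z⟩
  have hfx' : f x' = 0 := (Finset.sum_eq_zero_iff_of_nonneg fun u _ => sq_nonneg _).mp hrest x' hx'N
  rw [inter_subtendedOvoid_eq_sep hO.1]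
  exact_mod_cast sub_eq_zero.mp (pow_eq_zero_iff two_ne_zero |>.mp hfx')

end IsFullSubGQ

theorem statement13_general {P L : Type} [Finite P] [Finite L]
    (I : P → L → Prop) (P' : Set P) (L' : Set L) (s t t' θ : ℕ)
    (hGQ : IsGQ I) (hOrd : HasOrder I s t) (hs : 2 ≤ s)
    (hSubGQ : IsGQ (SubIncid I P' L'))
    (hSubOrd : HasOrder (SubIncid I P' L') s t')
    (hFull : IsFull I P' L')
    (htst : t = s * t') (hθt : (θ - 1) * t = s ^ 2) (hθ : 1 < θ)
    (hθsub : AllThetaSubtended I P' θ)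
    (x x' : P) (hx : x ∉ P') (hx' : x' ∉ P') :
    ((∀ z ∈ perpSet I (subtendedOvoid I P' x), ¬ Collinear I x' z) →
      (subtendedOvoid I P' x ∩ subtendedOvoid I P' x').ncard = t / s + 1) ∧
    (x' ∉ perpSet I (subtendedOvoid I P' x) →
      (∃ z ∈ perpSet I (subtendedOvoid I P' x), Collinear I x' z) →
      (subtendedOvoid I P' x ∩ subtendedOvoid I P' x').ncard = 1) := by
  rcases P'.eq_empty_or_nonempty with rfl | hne
  · have hperp : x' ∈ perpSet I (subtendedOvoid I ∅ x) := fun y hy => absurd hy.1 (notMem_empty y)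
    exact ⟨fun h => absurd (collinear_refl I x') (h x' hperp), fun h => absurd hperp h⟩
  subst htst
  have hS : IsFullSubGQ I P' L' s t' := ⟨hGQ, hSubGQ, hSubOrd, hFull⟩
  have ht' : 0 < t' := Nat.pos_of_ne_zero fun h => by
    rw [h, mul_zero, mul_zero] at hθt
    nlinarith
  obtain ⟨θ₁, rfl⟩ : ∃ θ₁, θ = θ₁ + 1 := ⟨θ - 1, by omega⟩
  have hθ₁ : θ₁ * t' = s := Nat.eq_of_mul_eq_mul_left (by omega : 0 < s) <| by
    rw [Nat.add_sub_cancel] at hθt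
    linear_combination hθt
  have hΘ : (perpSet I (subtendedOvoid I P' x)).ncard * t' = s + t' := by
    rw [hS.perpSet_subtendedOvoid ht' hs hne hx, hθsub x hx, add_mul, hθ₁, one_mul]
  refine ⟨fun h => ?_, fun hx'Θ ⟨z, hz, hx'z⟩ =>
    hS.ncard_inter_of_collinear_mem_perpSet ht' hs hOrd hne hx hx' hx'Θ hz hx'z⟩
  rw [Nat.mul_div_cancel_left t' (by omega)]
  exact hS.ncard_inter_of_forall_not_collinear ht' hs hOrd hne hx hΘ hx' h

/-- intersection numbers of subtended ovoids, under
`t' ≠ 1`, `t = s·t'`, `(θ−1)·t = s²`, every subtended ovoid θ-subtended, `θ > 1`. -/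
theorem statement13 {P L : Type} [Finite P] [Finite L]
    (I : P → L → Prop) (P' : Set P) (L' : Set L) (s t t' θ : ℕ)
    (hGQ : IsGQ I) (hOrd : HasOrder I s t) (hs : 2 ≤ s)
    (hSubGQ : IsGQ (SubIncid I P' L'))
    (hSubOrd : HasOrder (SubIncid I P' L') s t')
    (hFull : IsFull I P' L')
    (hProper : P' ≠ Set.univ ∨ L' ≠ Set.univ)
    (ht' : t' ≠ 1) (htst : t = s * t') (hθt : (θ - 1) * t = s ^ 2) (hθ : 1 < θ)
    (hθsub : AllThetaSubtended I P' θ)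
    (x x' : P) (hx : x ∉ P') (hx' : x' ∉ P') :
    ((∀ z ∈ perpSet I (subtendedOvoid I P' x), ¬ Collinear I x' z) →
      (subtendedOvoid I P' x ∩ subtendedOvoid I P' x').ncard = t / s + 1) ∧
    (x' ∉ perpSet I (subtendedOvoid I P' x) →
      (∃ z ∈ perpSet I (subtendedOvoid I P' x), Collinear I x' z) →
      (subtendedOvoid I P' x ∩ subtendedOvoid I P' x').ncard = 1) :=
  statement13_general I P' L' s t t' θ hGQ hOrd hs hSubGQ hSubOrd hFull htst hθt hθ hθsub x x' hx
    hx'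

end GQpaper
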